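/- Let (x_t)_{t=a}^{b+1} and (u_t)_{t=a}^{b} be sequences in a set X of diameter at most B in ℝ^d (with 0 ∈ X), and let η > 0. Then Σ_{t=a}^{b} (‖x_t - u_t‖² - ‖x_{t+1} - u_t‖²)/(2η) ≤ (B/η)·Σ_{t=a+1}^{b} ‖u_{t-1} - u_t‖ + (7B²)/(4η). -/
import Mathlib

open Finset RealInnerProductSpace

/-- Telescoping bound: for sequences `(x_t)_{t=a}^{b+1}` and `(u_t)_{t=a}^{b}` in a set `X`
of diameter at most `B` containing `0`, and `η > 0`,
`Σ_{t=a}^{b} (‖x_t - u_t‖² - ‖x_{t+1} - u_t‖²)/(2η)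
  ≤ (B/η)·Σ_{t=a+1}^{b} ‖u_{t-1} - u_t‖ + 7B²/(4η)`. -/
theorem stmt_4 {d : ℕ} (X : Set (EuclideanSpace ℝ (Fin d)))
    (B : ℝ) (hB : ∀ x ∈ X, ∀ y ∈ X, ‖x - y‖ ≤ B) (h0 : (0 : EuclideanSpace ℝ (Fin d)) ∈ X)
    (η : ℝ) (hη : 0 < η)
    (a b : ℕ) (hab : a ≤ b)
    (x u : ℕ → EuclideanSpace ℝ (Fin d))
    (hx : ∀ t ∈ Finset.Icc a (b + 1), x t ∈ X)
    (hu : ∀ t ∈ Finset.Icc a b, u t ∈ X) :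
    ∑ t ∈ Finset.Icc a b, (‖x t - u t‖ ^ 2 - ‖x (t + 1) - u t‖ ^ 2) / (2 * η) ≤
      (B / η) * ∑ t ∈ Finset.Icc (a + 1) b, ‖u (t - 1) - u t‖ + 7 * B ^ 2 / (4 * η) := by
  have hB0 : 0 ≤ B := by simpa using hB 0 h0 0 h0
  have hnorm : ∀ z ∈ X, ‖z‖ ≤ B := fun z hz => by simpa using hB z hz 0 h0
  -- Abel summation identity
  have key : ∀ c, a ≤ c → c ≤ b →
      ∑ t ∈ Icc a c, (‖x t - u t‖ ^ 2 - ‖x (t + 1) - u t‖ ^ 2)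
      = ‖x a‖ ^ 2 - ‖x (c + 1)‖ ^ 2 + 2 * ⟪u c, x (c + 1)⟫
          - 2 * ⟪u a, x a⟫
        + ∑ t ∈ Icc (a + 1) c, 2 * ⟪u (t - 1) - u t, x t⟫ := by
    intro c hac
    induction c, hac using Nat.le_induction with
    | base =>
      intro _
      rw [Icc_self, sum_singleton, Icc_eq_empty (by omega), sum_empty]
      rw [norm_sub_sq_real, norm_sub_sq_real, real_inner_comm (x a),
        real_inner_comm (x (a + 1))]
      ring
    | succ n hn ih =>
      intro hnb
      rw [sum_Icc_succ_top (by omega), sum_Icc_succ_top (by omega), ih (by omega)]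
      have h1 : ‖x (n + 1) - u (n + 1)‖ ^ 2 - ‖x (n + 1 + 1) - u (n + 1)‖ ^ 2
          = ‖x (n + 1)‖ ^ 2 - ‖x (n + 1 + 1)‖ ^ 2 + 2 * ⟪u (n + 1), x (n + 1 + 1)⟫
            - 2 * ⟪u (n + 1), x (n + 1)⟫ := by
        rw [norm_sub_sq_real, norm_sub_sq_real, real_inner_comm (x (n + 1)),
          real_inner_comm (x (n + 1 + 1))]
        ring
      have h2 : (⟪u (n + 1 - 1) - u (n + 1), x (n + 1)⟫ : ℝ)
          = ⟪u n, x (n + 1)⟫ - ⟪u (n + 1), x (n + 1)⟫ := by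
        simp [inner_sub_left]
      rw [h1, h2]; ring
  -- bound the pieces
  have hxa : x a ∈ X := hx a (by simp; omega)
  have hxb1 : x (b + 1) ∈ X := hx (b + 1) (by simp; omega)
  have hua : u a ∈ X := hu a (by simp; omega)
  have hub : u b ∈ X := hu b (by simp; omega)
  have hS : ∑ t ∈ Icc a b, (‖x t - u t‖ ^ 2 - ‖x (t + 1) - u t‖ ^ 2)
      ≤ 2 * B * ∑ t ∈ Icc (a + 1) b, ‖u (t - 1) - u t‖ + 7 * B ^ 2 / 2 := by
    rw [key b hab le_rfl]
    have h1 : ‖x a‖ ^ 2 ≤ B ^ 2 := by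
      have := hnorm _ hxa
      nlinarith [norm_nonneg (x a)]
    have h2 : (0 : ℝ) ≤ ‖x (b + 1)‖ ^ 2 := by positivity
    have h3 : (⟪u b, x (b + 1)⟫ : ℝ) ≤ B ^ 2 := by
      have := real_inner_le_norm (u b) (x (b + 1))
      nlinarith [hnorm _ hub, hnorm _ hxb1, norm_nonneg (u b), norm_nonneg (x (b + 1))]
    have h4 : -(B ^ 2) / 4 ≤ (⟪u a, x a⟫ : ℝ) := by
      rw [show (⟪u a, x a⟫ : ℝ) = (‖u a + x a‖ * ‖u a + x a‖ - ‖u a - x a‖ * ‖u a - x a‖) / 4 by simpa using re_inner_eq_norm_add_mul_self_sub_norm_sub_mul_self_div_four (𝕜 := ℝ) (u a) (x a)]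
      have hd : ‖u a - x a‖ ≤ B := hB _ hua _ hxa
      nlinarith [norm_nonneg (u a + x a), norm_nonneg (u a - x a)]
    have h5 : ∑ t ∈ Icc (a + 1) b, (2 * ⟪u (t - 1) - u t, x t⟫ : ℝ)
        ≤ 2 * B * ∑ t ∈ Icc (a + 1) b, ‖u (t - 1) - u t‖ := by
      rw [mul_sum]
      apply sum_le_sum
      intro t ht
      simp only [mem_Icc] at ht
      have hxt : x t ∈ X := hx t (by simp; omega)
      have hcs := real_inner_le_norm (u (t - 1) - u t) (x t)
      have hxtB := hnorm _ hxt
      have hn : (0 : ℝ) ≤ ‖u (t - 1) - u t‖ := norm_nonneg _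
      nlinarith
    linarith
  -- divide by 2η
  have h2η : (0 : ℝ) < 2 * η := by linarith
  rw [← sum_div]
  rw [div_le_iff₀ h2η]
  have : (B / η) * ∑ t ∈ Icc (a + 1) b, ‖u (t - 1) - u t‖ + 7 * B ^ 2 / (4 * η)
      = (2 * B * ∑ t ∈ Icc (a + 1) b, ‖u (t - 1) - u t‖ + 7 * B ^ 2 / 2) / (2 * η) := by
    field_simp
    ring
  rw [this, div_mul_cancel₀ _ (ne_of_gt h2η)]
  exact hS
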